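/- Let H be a real Hilbert space and K ⊆ H a closed nonempty set that is r-prox-regular for some r > 0. Fix x̄ ∈ K and v ∈ N^P_K(x̄) (proximal normal cone) with ‖v‖ < r. Then for all x ∈ K: ‖x − (x̄ + v)‖² ≥ (1 − ‖v‖/r)‖x − x̄‖² + ‖v‖². In particular, the projection of x̄ + v onto K is the singleton {x̄}. -/
import Mathlib


open Filter Topology
open scoped RealInnerProductSpace Classical

variable {H : Type*} [NormedAddCommGroup H] [InnerProductSpace ℝ H] [CompleteSpace H]

/-- Second-order difference quotient of `j` at `x` for `g` with step `t` and direction `w`. -/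
noncomputable def secondQuotH (j : H → EReal) (x g : H) (t : ℝ) (w : H) : EReal :=
  ((2 / t ^ 2 : ℝ) : EReal) * (j (x + t • w) - j x - ((t * ⟪g, w⟫ : ℝ) : EReal))

/-- Weak convergence of a sequence in the Hilbert space `H`. -/
def WeakTendstoH (z : ℕ → H) (z₀ : H) : Prop :=
  ∀ w : H, Tendsto (fun n => ⟪z n, w⟫) atTop (nhds ⟪z₀, w⟫)

/-- The weak second subderivative of `j` at `x` for `g`. -/
noncomputable def QsubH (j : H → EReal) (x g z : H) : EReal :=
  sInf { L | ∃ (t : ℕ → ℝ) (zs : ℕ → H),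
      (∀ n, 0 < t n) ∧ Tendsto t atTop (nhds 0) ∧ WeakTendstoH zs z ∧
      L = Filter.liminf (fun n => secondQuotH j x g (t n) (zs n)) atTop }

/-- The indicator function of a set, with values in `EReal`. -/
noncomputable def indicatorE (K : Set H) : H → EReal := fun y => if y ∈ K then 0 else ⊤

/-- The tangent cone `T_K(x) = cl(ℝ⁺ (K - x))`. -/
def tangentConeH (K : Set H) (x : H) : Set H :=
  closure { z : H | ∃ c : ℝ, 0 ≤ c ∧ ∃ k ∈ K, z = c • (k - x) }

/-- The second-order tangent set `T²_K(x, z)`. -/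
def secondTangentH (K : Set H) (x z : H) : Set H :=
  { r : H | Tendsto (fun t : ℝ => Metric.infDist (x + t • z + (t ^ 2 / 2) • r) K / t ^ 2)
      (nhdsWithin 0 (Set.Ioi 0)) (nhds 0) }

/-- The proximal normal cone condition: `v ∈ N^P_K(x̄)`. -/
def ProxNormal (K : Set H) (xb v : H) : Prop :=
  ∃ l : ℝ, 0 ≤ l ∧ ∃ y : H, (xb ∈ K ∧ ∀ k ∈ K, ‖xb - y‖ ≤ ‖k - y‖) ∧ v = l • (y - xb)

/-- `K` is `r`-prox-regular. -/
def ProxRegular (r : ℝ) (K : Set H) : Prop :=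
  ∀ xb ∈ K, ∀ x ∈ K, ∀ v : H, ProxNormal K xb v →
    r * ⟪v, x - xb⟫ ≤ (1 / 2) * ‖v‖ * ‖x - xb‖ ^ 2

/-- Strong second-order epi-differentiability of `j` at `x` for `g`. -/
def StrongTwiceEpiH (j : H → EReal) (x g : H) : Prop :=
  ∀ z : H, ∀ t : ℕ → ℝ, (∀ n, 0 < t n) → Tendsto t atTop (nhds 0) →
    ∃ zs : ℕ → H, Tendsto zs atTop (nhds z) ∧
      Tendsto (fun n => secondQuotH j x g (t n) (zs n)) atTop (nhds (QsubH j x g z))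

/-- for an `r`-prox-regular set `K`, a point `x̄ ∈ K` and a proximal normal
`v` with `‖v‖ < r`, one has `‖x − (x̄+v)‖² ≥ (1 − ‖v‖/r)‖x − x̄‖² + ‖v‖²` for all `x ∈ K`;
in particular the projection of `x̄ + v` onto `K` is the singleton `{x̄}`. -/
theorem proxRegular_quadratic_estimate (K : Set H) (hKcl : IsClosed K) (hKne : K.Nonempty)
    (r : ℝ) (hr : 0 < r) (hreg : ProxRegular r K)
    (xb : H) (hxb : xb ∈ K) (v : H) (hv : ProxNormal K xb v) (hvr : ‖v‖ < r) :
    (∀ x ∈ K, (1 - ‖v‖ / r) * ‖x - xb‖ ^ 2 + ‖v‖ ^ 2 ≤ ‖x - (xb + v)‖ ^ 2) ∧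
    { k : H | k ∈ K ∧ ∀ k' ∈ K, ‖k - (xb + v)‖ ≤ ‖k' - (xb + v)‖ } = {xb} := by
  have key : ∀ x ∈ K, (1 - ‖v‖ / r) * ‖x - xb‖ ^ 2 + ‖v‖ ^ 2 ≤ ‖x - (xb + v)‖ ^ 2 := by
    intro x hx
    have hreg' := hreg xb hxb x hx v hv
    have hexp : ‖x - (xb + v)‖ ^ 2 = ‖x - xb‖ ^ 2 - 2 * ⟪x - xb, v⟫ + ‖v‖ ^ 2 := by
      have : x - (xb + v) = (x - xb) - v := by abel
      rw [this, ← real_inner_self_eq_norm_sq, ← real_inner_self_eq_norm_sq,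
        ← real_inner_self_eq_norm_sq, inner_sub_sub_self, real_inner_comm v (x - xb)]
      ring
    rw [hexp]
    have hsymm : ⟪x - xb, v⟫ = ⟪v, x - xb⟫ := real_inner_comm _ _
    rw [hsymm]
    have h2 : 2 * ⟪v, x - xb⟫ ≤ (‖v‖ / r) * ‖x - xb‖ ^ 2 := by
      rw [div_mul_eq_mul_div, le_div_iff₀ hr]
      nlinarith
    nlinarith
  refine ⟨key, ?_⟩
  ext k
  simp only [Set.mem_setOf_eq, Set.mem_singleton_iff]
  constructor
  · rintro ⟨hkK, hmin⟩
    have h1 := hmin xb hxb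
    have h2 : ‖xb - (xb + v)‖ = ‖v‖ := by
      rw [show xb - (xb + v) = -v by abel, norm_neg]
    rw [h2] at h1
    have h3 := key k hkK
    have h4 : ‖k - (xb + v)‖ ^ 2 ≤ ‖v‖ ^ 2 := by
      apply sq_le_sq' <;> nlinarith [norm_nonneg (k - (xb + v)), norm_nonneg v]
    have h5 : (1 - ‖v‖ / r) * ‖k - xb‖ ^ 2 ≤ 0 := by linarith
    have h6 : 0 < 1 - ‖v‖ / r := by
      have : ‖v‖ / r < 1 := (div_lt_one hr).mpr hvr
      linarith
    have h7 : ‖k - xb‖ ^ 2 ≤ 0 := by nlinarith [sq_nonneg ‖k - xb‖]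
    have : ‖k - xb‖ = 0 := by nlinarith [norm_nonneg (k - xb), sq_nonneg ‖k - xb‖]
    have := norm_eq_zero.mp this
    have : k = xb := by
      have := sub_eq_zero.mp this
      exact this
    exact this
  · intro hk
    rw [hk]
    refine ⟨hxb, fun k' hk' => ?_⟩
    have h2 : ‖xb - (xb + v)‖ = ‖v‖ := by
      rw [show xb - (xb + v) = -v by abel, norm_neg]
    rw [h2]
    have h3 := key k' hk'
    have h6 : 0 ≤ 1 - ‖v‖ / r := by
      have : ‖v‖ / r < 1 := (div_lt_one hr).mpr hvr
      linarith
    have : ‖v‖ ^ 2 ≤ ‖k' - (xb + v)‖ ^ 2 := by nlinarith [sq_nonneg ‖k' - xb‖]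
    nlinarith [norm_nonneg (k' - (xb + v)), norm_nonneg v]
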